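/- arXiv:1905.08005 — 3 statements merged into one kernel-verified Lean document; each statement's English description precedes it below -/
import Mathlib

section
/- For all real x ∈ (0,3) with x not an integer, (2/3)(1/x + 1/(3-x)) ≤ ∑_{k ∈ ℤ, k ∉ {1,2}} 1/(x-k)². -/
open Real

/-!
All terms of the series are nonnegative, so it dominates its two terms `k = 0` and `k = 3`,
`1 / x ^ 2 + 1 / (3 - x) ^ 2`. Since `x + (3 - x) = 3`, the left-hand side equals
`2 / (x * (3 - x))`, and `2 * a⁻¹ * b⁻¹ ≤ a⁻¹ ^ 2 + b⁻¹ ^ 2` finishes the proof.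
-/
theorem add_le_tsum_of_nonneg {ι α : Type*} [AddCommMonoid α] [PartialOrder α]
    [IsOrderedAddMonoid α] [TopologicalSpace α] [OrderClosedTopology α] {f : ι → α}
    (hf : Summable f) (hf0 : ∀ k, 0 ≤ f k) {i j : ι} (hij : i ≠ j) :
    f i + f j ≤ ∑' k, f k := by
  classical
  simpa [Finset.sum_pair hij] using hf.sum_le_tsum {i, j} fun k _ ↦ hf0 k

theorem summable_one_div_sub_intCast_sq (x : ℝ) :
    Summable fun k : ℤ ↦ 1 / (x - k) ^ 2 := by
  refine ((summable_one_div_int_add_rpow (-x) 2).2 one_lt_two).congr fun k ↦ ?_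
  rw [← sub_eq_add_neg, rpow_two, sq_abs, sub_sq_comm]

theorem two_div_add_mul_one_div_add_one_div_le {a b : ℝ} (ha : a ≠ 0) (hb : b ≠ 0) :
    2 / (a + b) * (1 / a + 1 / b) ≤ 1 / a ^ 2 + 1 / b ^ 2 := by
  rcases eq_or_ne (a + b) 0 with hab | hab
  · rw [hab, div_zero, zero_mul]
    positivity
  · calc 2 / (a + b) * (1 / a + 1 / b) = 2 * a⁻¹ * b⁻¹ := by field_simp; ring
      _ ≤ a⁻¹ ^ 2 + b⁻¹ ^ 2 := two_mul_le_add_sq _ _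
      _ = 1 / a ^ 2 + 1 / b ^ 2 := by simp only [one_div, inv_pow]

theorem key_inequality_localizing_general (x : ℝ) (hx : x ∈ Set.Ioo (0 : ℝ) 3) :
    (2 / 3) * (1 / x + 1 / (3 - x)) ≤
      ∑' k : {k : ℤ // k ≠ 1 ∧ k ≠ 2}, 1 / (x - ((k : ℤ) : ℝ)) ^ 2 := by
  obtain ⟨hx0, hx3⟩ := hx
  let i₀ : {k : ℤ // k ≠ 1 ∧ k ≠ 2} := ⟨0, by decide⟩
  let i₃ : {k : ℤ // k ≠ 1 ∧ k ≠ 2} := ⟨3, by decide⟩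
  calc (2 / 3) * (1 / x + 1 / (3 - x)) = 2 / (x + (3 - x)) * (1 / x + 1 / (3 - x)) := by
        norm_num
    _ ≤ 1 / x ^ 2 + 1 / (3 - x) ^ 2 :=
        two_div_add_mul_one_div_add_one_div_le hx0.ne' (sub_pos.2 hx3).ne'
    _ = 1 / (x - ((i₀ : ℤ) : ℝ)) ^ 2 + 1 / (x - ((i₃ : ℤ) : ℝ)) ^ 2 := by
        simp [i₀, i₃, sub_sq_comm x]
    _ ≤ _ := add_le_tsum_of_nonneg ((summable_one_div_sub_intCast_sq x).subtype _)
        (fun _ ↦ one_div_nonneg.2 (sq_nonneg _)) (by decide)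

theorem key_inequality_localizing (x : ℝ) (hx : x ∈ Set.Ioo (0 : ℝ) 3)
    (hxi : ∀ k : ℤ, x ≠ (k : ℝ)) :
    (2 / 3) * (1 / x + 1 / (3 - x)) ≤
      ∑' k : {k : ℤ // k ≠ 1 ∧ k ≠ 2}, 1 / (x - ((k : ℤ) : ℝ)) ^ 2 :=
  key_inequality_localizing_general x hx
end

section
/- For all real x, the function φ(x) = (sin²(πx)/π²)·((2/3)(1/x − 1/(x−3)) + 1/(x−1)² + 1/(x−2)²) (extended continuously at x ∈ {0,1,2,3}) satisfies φ(x) ≤ 1 whenever x ∈ [0,3], and φ(x) ≤ 0 whenever x ≤ 0 or x ≥ 3. -/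
/-!
Away from `x ∈ {1, 2}` one has `φ x = sin² (π x) (3x² - 9x + 8) / (π² x (3 - x) (x - 1)² (x - 2)²)`.
Outside `[0, 3]` the denominator is nonpositive while the numerator is positive. On `[0, 3]`
the claim is symmetric under `x ↦ 3 - x`; on `[0, 3/2]` bound `sin² (π u)` by its degree-six
Taylor polynomial at `u = x` (for `x ≤ 1/2`) or `u = x - 1` (for `x ≥ 1/2`), with rational bounds
for `π²` and `π⁴`, and the remaining polynomial inequalities are certified in Bernstein form.
-/

open Real

/-- The localizing function `φ`, with the continuous extension at the
integer points `x ∈ {0,1,2,3}` (the formula itself extends continuously by `0`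
at `x = 0, 3` under Lean's junk-value conventions, and by `1` at `x = 1, 2`). -/
noncomputable def phi (x : ℝ) : ℝ :=
  if x = 1 ∨ x = 2 then 1
  else (Real.sin (π * x)) ^ 2 / π ^ 2 *
    ((2 / 3) * (1 / x - 1 / (x - 3)) + 1 / (x - 1) ^ 2 + 1 / (x - 2) ^ 2)

lemma monotoneOn_Ici_of_hasDerivAt_nonneg {f f' : ℝ → ℝ} {a : ℝ}
    (hf : ∀ x, HasDerivAt f (f' x) x) (hf' : ∀ x, a < x → 0 ≤ f' x) :
    MonotoneOn f (Set.Ici a) :=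
  monotoneOn_of_hasDerivWithinAt_nonneg (convex_Ici a)
    (fun x _ => (hf x).continuousAt.continuousWithinAt)
    (fun x _ => (hf x).hasDerivWithinAt) (fun x hx => hf' x (by simpa using hx))

namespace Real

theorem cos_le_taylor_quartic (x : ℝ) : cos x ≤ 1 - x ^ 2 / 2 + x ^ 4 / 24 := by
  have hmono : MonotoneOn (fun y => 1 - y ^ 2 / 2 + y ^ 4 / 24 - cos y) (Set.Ici 0) := by
    refine monotoneOn_Ici_of_hasDerivAt_nonneg (f' := fun y => -y + y ^ 3 / 6 + sin y)
      (fun y => ?_) (fun y hy => by nlinarith [sin_ge_sub_cube hy.le])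
    exact ((((hasDerivAt_const y 1).sub ((hasDerivAt_pow 2 y).div_const 2)).add
      ((hasDerivAt_pow 4 y).div_const 24)).sub (hasDerivAt_cos y)).congr_deriv (by push_cast; ring)
  have := hmono Set.self_mem_Ici (abs_nonneg x) (abs_nonneg x)
  simp only [cos_abs, Even.pow_abs (by decide : Even 2), Even.pow_abs (by decide : Even 4)] at this
  norm_num at this
  linarith

theorem sin_le_taylor_quintic {x : ℝ} (hx : 0 ≤ x) : sin x ≤ x - x ^ 3 / 6 + x ^ 5 / 120 := by
  have hmono : MonotoneOn (fun y => y - y ^ 3 / 6 + y ^ 5 / 120 - sin y) (Set.Ici 0) := by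
    refine monotoneOn_Ici_of_hasDerivAt_nonneg (f' := fun y => 1 - y ^ 2 / 2 + y ^ 4 / 24 - cos y)
      (fun y => ?_) (fun y _ => by linarith [cos_le_taylor_quartic y])
    exact ((((hasDerivAt_id y).sub ((hasDerivAt_pow 3 y).div_const 6)).add
      ((hasDerivAt_pow 5 y).div_const 120)).sub (hasDerivAt_sin y)).congr_deriv (by push_cast; ring)
  have := hmono Set.self_mem_Ici hx hx
  norm_num at this
  linarith

theorem taylor_sextic_le_cos (x : ℝ) :
    1 - x ^ 2 / 2 + x ^ 4 / 24 - x ^ 6 / 720 ≤ cos x := by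
  have hmono : MonotoneOn (fun y => cos y - (1 - y ^ 2 / 2 + y ^ 4 / 24 - y ^ 6 / 720))
      (Set.Ici 0) := by
    refine monotoneOn_Ici_of_hasDerivAt_nonneg
      (f' := fun y => y - y ^ 3 / 6 + y ^ 5 / 120 - sin y)
      (fun y => ?_) (fun y hy => by linarith [sin_le_taylor_quintic hy.le])
    exact ((hasDerivAt_cos y).sub ((((hasDerivAt_const y 1).sub
      ((hasDerivAt_pow 2 y).div_const 2)).add ((hasDerivAt_pow 4 y).div_const 24)).sub
      ((hasDerivAt_pow 6 y).div_const 720))).congr_deriv (by push_cast; ring)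
  have := hmono Set.self_mem_Ici (abs_nonneg x) (abs_nonneg x)
  simp only [cos_abs, Even.pow_abs (by decide : Even 2), Even.pow_abs (by decide : Even 4),
    Even.pow_abs (by decide : Even 6)] at this
  norm_num at this
  linarith

theorem sin_sq_le_taylor_sextic (x : ℝ) : sin x ^ 2 ≤ x ^ 2 - x ^ 4 / 3 + 2 * x ^ 6 / 45 := by
  nlinarith [sin_sq_eq_half_sub x, taylor_sextic_le_cos (2 * x)]

theorem pi_sq_gt_d4 : 9.8696 < π ^ 2 :=
  calc (9.8696 : ℝ) < 3.141592 ^ 2 := by norm_num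
    _ < π ^ 2 := pow_lt_pow_left₀ pi_gt_d6 (by norm_num) two_ne_zero

theorem pi_pow_four_lt_d3 : π ^ 4 < 97.412 :=
  calc π ^ 4 < 3.141593 ^ 4 := pow_lt_pow_left₀ pi_lt_d6 pi_pos.le four_ne_zero
    _ < 97.412 := by norm_num

end Real

-- `sin_sq_le_taylor_sextic` at `t = π u`, divided by `π²`, with `π²` and `π⁴` replaced by their
-- rational bounds.
noncomputable def sinSqMajorant (u : ℝ) : ℝ := u ^ 2 - 9.8696 / 3 * u ^ 4 + 2 * 97.412 / 45 * u ^ 6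

lemma sin_sq_pi_mul_le (u : ℝ) : sin (π * u) ^ 2 ≤ π ^ 2 * sinSqMajorant u := by
  have h₂ : 0 ≤ (π ^ 2 - 9.8696) * (π ^ 2 * u ^ 4) :=
    mul_nonneg (by linarith [pi_sq_gt_d4]) (by positivity)
  have h₄ : 0 ≤ (97.412 - π ^ 4) * (π ^ 2 * u ^ 6) :=
    mul_nonneg (by linarith [pi_pow_four_lt_d3]) (by positivity)
  have := sin_sq_le_taylor_sextic (π * u)
  unfold sinSqMajorant
  nlinarith

def phiNum (x : ℝ) : ℝ := 3 * x ^ 2 - 9 * x + 8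

def phiDen (x : ℝ) : ℝ := x * (3 - x) * (x - 1) ^ 2 * (x - 2) ^ 2

lemma phiNum_pos (x : ℝ) : 0 < phiNum x := by
  unfold phiNum; nlinarith [sq_nonneg (x - 3 / 2)]

lemma phiDen_nonneg {x : ℝ} (hx : x ∈ Set.Icc (0 : ℝ) 3) : 0 ≤ phiDen x := by
  obtain ⟨h₀, h₃⟩ := hx
  have : 0 ≤ 3 - x := by linarith
  unfold phiDen
  positivity

lemma phiDen_nonpos {x : ℝ} (hx : x ≤ 0 ∨ 3 ≤ x) : phiDen x ≤ 0 := by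
  have : x * (3 - x) ≤ 0 := by
    rcases hx with hx | hx
    · exact mul_nonpos_of_nonpos_of_nonneg hx (by linarith)
    · exact mul_nonpos_of_nonneg_of_nonpos (by linarith) (by linarith)
  unfold phiDen
  exact mul_nonpos_of_nonpos_of_nonneg (mul_nonpos_of_nonpos_of_nonneg this (sq_nonneg _))
    (sq_nonneg _)

-- `(phiDen x - sinSqMajorant x * phiNum x) / x` has positive Bernstein coefficients on `[0, 1/2]`;
-- likewise `(phiDen x - sinSqMajorant (x - 1) * phiNum x) / (x - 1) ^ 4` on `[1/2, 3/2]` below.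
lemma sinSqMajorant_mul_phiNum_le {x : ℝ} (hx₀ : 0 ≤ x) (hx : x ≤ 1 / 2) :
    sinSqMajorant x * phiNum x ≤ phiDen x := by
  have h := fun k l : ℕ => mul_nonneg (pow_nonneg hx₀ k) (pow_nonneg (sub_nonneg.2 hx) l)
  unfold sinSqMajorant phiNum phiDen
  linarith [h 1 7, h 2 6, h 3 5, h 4 4, h 5 3, h 6 2, h 7 1, h 8 0]

lemma sinSqMajorant_sub_one_mul_phiNum_le {x : ℝ} (hx₀ : 1 / 2 ≤ x) (hx : x ≤ 3 / 2) :
    sinSqMajorant (x - 1) * phiNum x ≤ phiDen x := by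
  have h := fun k l : ℕ => mul_nonneg (mul_nonneg (by positivity : (0 : ℝ) ≤ (x - 1) ^ 4)
    (pow_nonneg (sub_nonneg.2 hx₀) k)) (pow_nonneg (sub_nonneg.2 hx) l)
  unfold sinSqMajorant phiNum phiDen
  linarith [h 0 4, h 1 3, h 2 2, h 3 1, h 4 0]

lemma sin_sq_mul_phiNum_le_of_le_three_halves {x : ℝ} (hx₀ : 0 ≤ x) (hx : x ≤ 3 / 2) :
    sin (π * x) ^ 2 * phiNum x ≤ π ^ 2 * phiDen x := by
  have hN := (phiNum_pos x).le
  rcases le_total x (1 / 2) with hx' | hx'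
  · calc sin (π * x) ^ 2 * phiNum x ≤ π ^ 2 * sinSqMajorant x * phiNum x := by
          gcongr; exact sin_sq_pi_mul_le x
      _ ≤ π ^ 2 * phiDen x := by
          rw [mul_assoc]; gcongr; exact sinSqMajorant_mul_phiNum_le hx₀ hx'
  · have hshift : sin (π * x) ^ 2 = sin (π * (x - 1)) ^ 2 := by
      rw [mul_sub_one, sin_sub_pi, neg_sq]
    calc sin (π * x) ^ 2 * phiNum x ≤ π ^ 2 * sinSqMajorant (x - 1) * phiNum x := by
          rw [hshift]; gcongr; exact sin_sq_pi_mul_le (x - 1)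
      _ ≤ π ^ 2 * phiDen x := by
          rw [mul_assoc]; gcongr; exact sinSqMajorant_sub_one_mul_phiNum_le hx' hx

lemma sin_sq_mul_phiNum_le {x : ℝ} (hx : x ∈ Set.Icc (0 : ℝ) 3) :
    sin (π * x) ^ 2 * phiNum x ≤ π ^ 2 * phiDen x := by
  rcases le_total x (3 / 2) with hx' | hx'
  · exact sin_sq_mul_phiNum_le_of_le_three_halves hx.1 hx'
  · have h := sin_sq_mul_phiNum_le_of_le_three_halves (x := 3 - x) (by linarith [hx.2])
      (by linarith)
    have hsin : sin (π * (3 - x)) ^ 2 = sin (π * x) ^ 2 := by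
      rw [show π * (3 - x) = π - π * x + 2 * π by ring, sin_add_two_pi, sin_pi_sub]
    have hN : phiNum (3 - x) = phiNum x := by unfold phiNum; ring
    have hD : phiDen (3 - x) = phiDen x := by unfold phiDen; ring
    rwa [hsin, hN, hD] at h

lemma phi_eq_div {x : ℝ} (h₁ : x ≠ 1) (h₂ : x ≠ 2) :
    phi x = sin (π * x) ^ 2 * phiNum x / (π ^ 2 * phiDen x) := by
  rw [phi, if_neg (not_or.2 ⟨h₁, h₂⟩)]
  by_cases h₀ : x = 0
  · simp [h₀]
  by_cases h₃ : x = 3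
  · have : sin (π * 3) = 0 := by simpa [mul_comm] using sin_nat_mul_pi 3
    simp [h₃, this]
  unfold phiNum phiDen
  field_simp
  ring

theorem phi_minorant (x : ℝ) :
    (x ∈ Set.Icc (0 : ℝ) 3 → phi x ≤ 1) ∧ ((x ≤ 0 ∨ 3 ≤ x) → phi x ≤ 0) := by
  by_cases h : x = 1 ∨ x = 2
  · refine ⟨fun _ => by simp [phi, h], fun hx => ?_⟩
    rcases h with rfl | rfl <;> norm_num at hx
  obtain ⟨h₁, h₂⟩ := not_or.1 h
  rw [phi_eq_div h₁ h₂]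
  refine ⟨fun hx => div_le_one_of_le₀ (sin_sq_mul_phiNum_le hx) ?_, fun hx => ?_⟩
  · exact mul_nonneg (sq_nonneg π) (phiDen_nonneg hx)
  · exact div_nonpos_of_nonneg_of_nonpos (mul_nonneg (sq_nonneg _) (phiNum_pos x).le)
      (mul_nonpos_of_nonneg_of_nonpos (sq_nonneg π) (phiDen_nonpos hx))
end

section
/- For x ≤ 0 (with continuous extension at integers), φ(x) = (sin²(πx)/π²)·((2/3)(1/x − 1/(x−3)) + 1/(x−1)² + 1/(x−2)²) satisfies φ(x) ≤ 0. -/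
open Real

/-! Off `[0, 3]` the factor `sin² (π x) / π²` is nonnegative, and the rational factor is
`-(3x² - 9x + 8) / (x (x - 3) (x - 1)² (x - 2)²)`, whose numerator is negative definite and
whose denominator is positive there. -/

noncomputable def phiRational (x : ℝ) : ℝ :=
  (2 / 3) * (1 / x - 1 / (x - 3)) + 1 / (x - 1) ^ 2 + 1 / (x - 2) ^ 2

lemma phi_eq_of_ne {x : ℝ} (h1 : x ≠ 1) (h2 : x ≠ 2) :
    phi x = sin (π * x) ^ 2 / π ^ 2 * phiRational x := by
  rw [phi, if_neg (by rintro (h | h) <;> contradiction), phiRational]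

lemma phiRational_eq {x : ℝ} (h0 : x ≠ 0) (h1 : x ≠ 1) (h2 : x ≠ 2) (h3 : x ≠ 3) :
    phiRational x = -(3 * x ^ 2 - 9 * x + 8) / (x * (x - 3) * ((x - 1) * (x - 2)) ^ 2) := by
  have h1' : x - 1 ≠ 0 := sub_ne_zero.mpr h1
  have h2' : x - 2 ≠ 0 := sub_ne_zero.mpr h2
  have h3' : x - 3 ≠ 0 := sub_ne_zero.mpr h3
  rw [phiRational]
  field_simp
  ring

lemma phiRational_nonpos {x : ℝ} (hx : x < 0 ∨ 3 < x) : phiRational x ≤ 0 := by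
  have hout : 0 < x * (x - 3) := by
    rcases hx with hx | hx
    · exact mul_pos_of_neg_of_neg hx (by linarith)
    · exact mul_pos (by linarith) (by linarith)
  have hnum : 0 < 3 * x ^ 2 - 9 * x + 8 := by nlinarith [sq_nonneg (2 * x - 3)]
  rw [phiRational_eq (by rintro rfl; simp at hout) (by rintro rfl; norm_num at hout)
    (by rintro rfl; norm_num at hout) (by rintro rfl; simp at hout)]
  exact div_nonpos_of_nonpos_of_nonneg (by linarith) (by positivity)

theorem phi_nonpos_of_nonpos (x : ℝ) (hx : x ≤ 0) : phi x ≤ 0 := by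
  rcases hx.lt_or_eq with hneg | rfl
  · rw [phi_eq_of_ne (by linarith) (by linarith)]
    exact mul_nonpos_of_nonneg_of_nonpos (by positivity) (phiRational_nonpos (Or.inl hneg))
  · simp [phi]
end
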